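/- arXiv:2210.16816 — 5 statements merged into one kernel-verified Lean document; each statement's English description precedes it below -/
import Mathlib

section
/- If M is an R-module admitting a short exact sequence 0 → M → P → G → 0 with P projective and G projectively coresolved Gorenstein flat (PGF), then M is PGF. -/
open CategoryTheory

universe u

variable (R : Type u) [CommRing R]

/-- `M` is projectively coresolved Gorenstein flat (PGF). -/
def IsPGF (M : ModuleCat.{u} R) : Prop :=
  ∃ (P : ℤ → ModuleCat.{u} R) (d : (i : ℤ) → P (i + 1) →ₗ[R] P i),
    (∀ i, Module.Projective R (P i)) ∧
    (∀ i, Function.Exact (d (i + 1)) (d i)) ∧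
    Nonempty (LinearMap.range (d 0) ≃ₗ[R] M) ∧
    ∀ (I : ModuleCat.{u} R), Module.Injective R I →
      ∀ i, Function.Exact ((d (i + 1)).lTensor I) ((d i).lTensor I)

/-- The Tor groups `Tor_i(A, B)` as modules. -/
noncomputable def torM (i : ℕ) (A B : ModuleCat.{u} R) : ModuleCat.{u} R :=
  ((Tor (ModuleCat.{u} R) i).obj A).obj B

/-- `pdLE R n M` means that `M` has projective dimension at most `n`. -/
def pdLE : ℕ → ModuleCat.{u} R → Prop
  | 0, M => Module.Projective R M
  | n + 1, M =>
    ∃ (P : ModuleCat.{u} R) (f : P →ₗ[R] M), Module.Projective R P ∧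
      Function.Surjective f ∧ pdLE n (ModuleCat.of R (LinearMap.ker f))

/-- `pdEq R n M` means that `M` has projective dimension exactly `n`. -/
def pdEq (n : ℕ) (M : ModuleCat.{u} R) : Prop :=
  pdLE R n M ∧ ∀ m : ℕ, pdLE R m M → n ≤ m

/-- `idLE R n M` means that `M` has injective dimension at most `n`. -/
def idLE : ℕ → ModuleCat.{u} R → Prop
  | 0, M => Module.Injective R M
  | n + 1, M =>
    ∃ (I : ModuleCat.{u} R) (f : M →ₗ[R] I), Module.Injective R I ∧
      Function.Injective f ∧ idLE n (ModuleCat.of R (I ⧸ LinearMap.range f))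

/-- `pgfdimLE R n M` means that `M` has a resolution of length `n` by PGF modules. -/
def pgfdimLE : ℕ → ModuleCat.{u} R → Prop
  | 0, M => IsPGF R M
  | n + 1, M =>
    ∃ (G : ModuleCat.{u} R) (f : G →ₗ[R] M), IsPGF R G ∧
      Function.Surjective f ∧ pgfdimLE n (ModuleCat.of R (LinearMap.ker f))

/-- `M` has PGF-dimension exactly `n`. -/
def pgfdimEq (n : ℕ) (M : ModuleCat.{u} R) : Prop :=
  pgfdimLE R n M ∧ ∀ m : ℕ, pgfdimLE R m M → n ≤ m

/-- `M` is a strongly PGF module. -/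
def IsStronglyPGF (M : ModuleCat.{u} R) : Prop :=
  ∃ (P : ModuleCat.{u} R) (f : M →ₗ[R] P) (g : P →ₗ[R] M),
    Module.Projective R P ∧
    Function.Injective f ∧ Function.Exact f g ∧ Function.Surjective g ∧
    ∀ (I : ModuleCat.{u} R), Module.Injective R I →
      Function.Injective (f.lTensor I) ∧ Function.Exact (f.lTensor I) (g.lTensor I)

/-- `M` is a strongly `n`-PGF module. -/
def IsStronglyNPGF (n : ℕ) (M : ModuleCat.{u} R) : Prop :=
  ∃ (F : ModuleCat.{u} R) (f : M →ₗ[R] F) (g : F →ₗ[R] M),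
    Function.Injective f ∧ Function.Exact f g ∧ Function.Surjective g ∧
    pdLE R n F ∧
    ∀ (I : ModuleCat.{u} R), Module.Injective R I →
      Subsingleton (torM R (n + 1) I M)

/-- `M` is a direct summand of `N`. -/
def IsDirectSummand (M N : ModuleCat.{u} R) : Prop :=
  ∃ (i : M →ₗ[R] N) (p : N →ₗ[R] M), p ∘ₗ i = LinearMap.id


/-!
Choose a totally acyclic complex `Q` of projectives with `G ≅ im (d₀ : Q₁ → Q₀)` and let
`g : P → Q₀` be `P ↠ G ↪ Q₀`, so that `M ≅ ker g`. As `range g = range d₀` and `P`, `Q₁` are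
projective, there are `h : P → Q₁`, `τ : Q₁ → P` with `d₀ h = g`, `g τ = d₀`, and then
`η : Q₁ → Q₂` with `d₁ η = 1 - h τ`. With these, `⋯ → Q₄ → Q₃ × Q₁ → Q₂ × P → P → Q₀ → ⋯`
is an exact complex of projectives whose image in `P` is `ker g`. Its exactness only uses
exactness of `Q` and identities between `d`, `g`, `h`, `τ`, `η`, all of which survive `I ⊗ -`;
so the same argument applied to `I ⊗ Q` shows that it stays exact after tensoring.
-/

theorem Module.Projective.exists_comp_eq_of_range_le {R P M N : Type*} [Semiring R]
    [AddCommMonoid P] [AddCommMonoid M] [AddCommMonoid N] [Module R P] [Module R M] [Module R N]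
    [Module.Projective R P] {f : P →ₗ[R] N} {g : M →ₗ[R] N}
    (h : LinearMap.range f ≤ LinearMap.range g) : ∃ l : P →ₗ[R] M, g ∘ₗ l = f := by
  obtain ⟨l, hl⟩ := Module.projective_lifting_property g.rangeRestrict
    (f.codRestrict _ fun p => h ⟨p, rfl⟩) g.surjective_rangeRestrict
  exact ⟨l, LinearMap.ext fun p => congr_arg Subtype.val (LinearMap.congr_fun hl p)⟩

theorem Function.Exact.of_comp_eq_of_comp_eq {R A B C D : Type*} [Ring R]
    [AddCommGroup A] [AddCommGroup B] [AddCommGroup C] [AddCommGroup D]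
    [Module R A] [Module R B] [Module R C] [Module R D]
    {d : A →ₗ[R] B} {e : B →ₗ[R] C} {g : D →ₗ[R] B} {h : D →ₗ[R] A} {τ : A →ₗ[R] D}
    (hd : Function.Exact d e) (hh : d ∘ₗ h = g) (hτ : g ∘ₗ τ = d) : Function.Exact g e := by
  rw [LinearMap.exact_iff] at hd ⊢
  have hg : LinearMap.range g ≤ LinearMap.range d := hh ▸ LinearMap.range_comp_le_range h d
  have hd' : LinearMap.range d ≤ LinearMap.range g := hτ ▸ LinearMap.range_comp_le_range τ g
  rw [hd, le_antisymm hg hd']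

section SpliceMaps

variable {R Q₀ Q₁ Q₂ Q₃ Q₄ Q₅ P : Type*} [Ring R] [AddCommGroup Q₀]
  [AddCommGroup Q₁] [AddCommGroup Q₂] [AddCommGroup Q₃] [AddCommGroup Q₄] [AddCommGroup Q₅]
  [AddCommGroup P] [Module R Q₀] [Module R Q₁] [Module R Q₂] [Module R Q₃] [Module R Q₄]
  [Module R Q₅] [Module R P]

def spliceMap₀ (d₁ : Q₂ →ₗ[R] Q₁) (h : P →ₗ[R] Q₁) (τ : Q₁ →ₗ[R] P) : Q₂ × P →ₗ[R] P :=
  LinearMap.snd R Q₂ P - τ ∘ₗ d₁.coprod h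

def spliceMap₁ (d₂ : Q₃ →ₗ[R] Q₂) (η : Q₁ →ₗ[R] Q₂) (τ : Q₁ →ₗ[R] P) :
    Q₃ × Q₁ →ₗ[R] Q₂ × P :=
  (d₂.coprod η).prod (τ ∘ₗ LinearMap.snd R Q₃ Q₁)

def spliceMap₂ (d₃ : Q₄ →ₗ[R] Q₃) : Q₄ →ₗ[R] Q₃ × Q₁ :=
  LinearMap.inl R Q₃ Q₁ ∘ₗ d₃

@[simp]
theorem spliceMap₀_apply (d₁ : Q₂ →ₗ[R] Q₁) (h : P →ₗ[R] Q₁) (τ : Q₁ →ₗ[R] P) (x : Q₂ × P) :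
    spliceMap₀ d₁ h τ x = x.2 - τ (d₁ x.1 + h x.2) :=
  rfl

@[simp]
theorem spliceMap₁_apply (d₂ : Q₃ →ₗ[R] Q₂) (η : Q₁ →ₗ[R] Q₂) (τ : Q₁ →ₗ[R] P) (x : Q₃ × Q₁) :
    spliceMap₁ d₂ η τ x = (d₂ x.1 + η x.2, τ x.2) :=
  rfl

@[simp]
theorem spliceMap₂_apply (d₃ : Q₄ →ₗ[R] Q₃) (w : Q₄) :
    (spliceMap₂ d₃ w : Q₃ × Q₁) = (d₃ w, 0) :=
  rfl

theorem exact_spliceMap₀ {d₀ : Q₁ →ₗ[R] Q₀} {d₁ : Q₂ →ₗ[R] Q₁} {g : P →ₗ[R] Q₀}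
    {h : P →ₗ[R] Q₁} {τ : Q₁ →ₗ[R] P} (hd : Function.Exact d₁ d₀) (hh : d₀ ∘ₗ h = g)
    (hτ : g ∘ₗ τ = d₀) : Function.Exact (spliceMap₀ d₁ h τ) g := by
  have hτ' (x : Q₁) : g (τ x) = d₀ x := LinearMap.congr_fun hτ x
  have hh' (p : P) : d₀ (h p) = g p := LinearMap.congr_fun hh p
  intro p
  constructor
  · intro hp
    obtain ⟨y, hy⟩ := (hd (h p)).1 (by rw [hh', hp])
    exact ⟨(-y, p), by simp [hy]⟩
  · rintro ⟨⟨y, p⟩, rfl⟩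
    simp [hτ', hh', hd.apply_apply_eq_zero]

theorem exact_spliceMap₁_spliceMap₀ {d₁ : Q₂ →ₗ[R] Q₁} {d₂ : Q₃ →ₗ[R] Q₂} {h : P →ₗ[R] Q₁}
    {τ : Q₁ →ₗ[R] P} {η : Q₁ →ₗ[R] Q₂} (hd : Function.Exact d₂ d₁)
    (hη : d₁ ∘ₗ η = LinearMap.id - h ∘ₗ τ) :
    Function.Exact (spliceMap₁ d₂ η τ) (spliceMap₀ d₁ h τ) := by
  have hη' (x : Q₁) : d₁ (η x) = x - h (τ x) := LinearMap.congr_fun hη x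
  rintro ⟨y, p⟩
  constructor
  · intro hyp
    have hp : τ (d₁ y + h p) = p := (sub_eq_zero.1 hyp).symm
    obtain ⟨z, hz⟩ := (hd (y - η (d₁ y + h p))).1 (by rw [map_sub, hη', hp]; abel)
    exact ⟨(z, d₁ y + h p), by simp [hz, hp]⟩
  · rintro ⟨⟨z, x⟩, hzx⟩
    rw [← hzx]
    simp [hη', hd.apply_apply_eq_zero]

theorem exact_spliceMap₂_spliceMap₁ {d₁ : Q₂ →ₗ[R] Q₁} {d₂ : Q₃ →ₗ[R] Q₂} {d₃ : Q₄ →ₗ[R] Q₃}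
    {h : P →ₗ[R] Q₁} {τ : Q₁ →ₗ[R] P} {η : Q₁ →ₗ[R] Q₂} (hd : Function.Exact d₃ d₂)
    (hd₁₂ : d₁ ∘ₗ d₂ = 0) (hη : d₁ ∘ₗ η = LinearMap.id - h ∘ₗ τ) :
    Function.Exact (spliceMap₂ d₃) (spliceMap₁ d₂ η τ) := by
  rintro ⟨z, x⟩
  constructor
  · intro hzx
    simp only [spliceMap₁_apply, Prod.mk_eq_zero] at hzx
    have hd₁₂' : d₁ (d₂ z) = 0 := LinearMap.congr_fun hd₁₂ z
    have hη' : d₁ (η x) = x - h (τ x) := LinearMap.congr_fun hη x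
    have hx : x = 0 := by simpa [hd₁₂', hη', hzx.2] using congr_arg d₁ hzx.1
    subst hx
    obtain ⟨w, hw⟩ := (hd z).1 (by simpa using hzx.1)
    exact ⟨w, by simp [hw]⟩
  · rintro ⟨w, hw⟩
    rw [← hw]
    simp [hd.apply_apply_eq_zero]

theorem exact_spliceMap₂ {d₃ : Q₄ →ₗ[R] Q₃} {d₄ : Q₅ →ₗ[R] Q₄} (hd : Function.Exact d₄ d₃) :
    Function.Exact d₄ (spliceMap₂ d₃ : Q₄ →ₗ[R] Q₃ × Q₁) :=
  (LinearMap.inl_injective).comp_exact_iff_exact.2 hd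

end SpliceMaps

section SpliceMapsTensor

open TensorProduct

variable {R Q₀ Q₁ Q₂ Q₃ Q₄ Q₅ P : Type*} [CommRing R] [AddCommGroup Q₀]
  [AddCommGroup Q₁] [AddCommGroup Q₂] [AddCommGroup Q₃] [AddCommGroup Q₄] [AddCommGroup Q₅]
  [AddCommGroup P] [Module R Q₀] [Module R Q₁] [Module R Q₂] [Module R Q₃] [Module R Q₄]
  [Module R Q₅] [Module R P] (I : Type*) [AddCommGroup I] [Module R I]

theorem lTensor_spliceMap₀ (d₁ : Q₂ →ₗ[R] Q₁) (h : P →ₗ[R] Q₁) (τ : Q₁ →ₗ[R] P) :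
    (spliceMap₀ d₁ h τ).lTensor I = spliceMap₀ (d₁.lTensor I) (h.lTensor I) (τ.lTensor I) ∘ₗ
      (prodRight R R I Q₂ P).toLinearMap := by
  apply TensorProduct.ext'
  rintro x ⟨y, p⟩
  simp [tmul_sub, tmul_add]

theorem lTensor_spliceMap₁ (d₂ : Q₃ →ₗ[R] Q₂) (η : Q₁ →ₗ[R] Q₂) (τ : Q₁ →ₗ[R] P) :
    (spliceMap₁ d₂ η τ).lTensor I = (prodRight R R I Q₂ P).symm.toLinearMap ∘ₗ
      spliceMap₁ (d₂.lTensor I) (η.lTensor I) (τ.lTensor I) ∘ₗ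
        (prodRight R R I Q₃ Q₁).toLinearMap := by
  apply TensorProduct.ext'
  rintro x ⟨z, y⟩
  simp [eq_comm (a := x ⊗ₜ[R] _), LinearEquiv.symm_apply_eq, tmul_add]

theorem lTensor_spliceMap₂ (d₃ : Q₄ →ₗ[R] Q₃) :
    (spliceMap₂ d₃ : Q₄ →ₗ[R] Q₃ × Q₁).lTensor I =
      (prodRight R R I Q₃ Q₁).symm.toLinearMap ∘ₗ spliceMap₂ (d₃.lTensor I) := by
  apply TensorProduct.ext'
  intro x w
  simp [eq_comm (a := x ⊗ₜ[R] _), LinearEquiv.symm_apply_eq]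

variable {I}

theorem lTensor_exact_of_comp_eq_of_comp_eq {d : Q₁ →ₗ[R] Q₀} {e : Q₀ →ₗ[R] Q₂}
    {g : P →ₗ[R] Q₀} {h : P →ₗ[R] Q₁} {τ : Q₁ →ₗ[R] P}
    (hd : Function.Exact (d.lTensor I) (e.lTensor I)) (hh : d ∘ₗ h = g) (hτ : g ∘ₗ τ = d) :
    Function.Exact (g.lTensor I) (e.lTensor I) :=
  hd.of_comp_eq_of_comp_eq (by rw [← LinearMap.lTensor_comp, hh])
    (by rw [← LinearMap.lTensor_comp, hτ])

theorem lTensor_exact_spliceMap₀ {d₀ : Q₁ →ₗ[R] Q₀} {d₁ : Q₂ →ₗ[R] Q₁} {g : P →ₗ[R] Q₀}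
    {h : P →ₗ[R] Q₁} {τ : Q₁ →ₗ[R] P} (hd : Function.Exact (d₁.lTensor I) (d₀.lTensor I))
    (hh : d₀ ∘ₗ h = g) (hτ : g ∘ₗ τ = d₀) :
    Function.Exact ((spliceMap₀ d₁ h τ).lTensor I) (g.lTensor I) := by
  rw [lTensor_spliceMap₀, LinearEquiv.precomp_exact_iff_exact]
  exact exact_spliceMap₀ hd (by rw [← LinearMap.lTensor_comp, hh])
    (by rw [← LinearMap.lTensor_comp, hτ])

theorem lTensor_exact_spliceMap₁_spliceMap₀ {d₁ : Q₂ →ₗ[R] Q₁} {d₂ : Q₃ →ₗ[R] Q₂}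
    {h : P →ₗ[R] Q₁} {τ : Q₁ →ₗ[R] P} {η : Q₁ →ₗ[R] Q₂}
    (hd : Function.Exact (d₂.lTensor I) (d₁.lTensor I))
    (hη : d₁ ∘ₗ η = LinearMap.id - h ∘ₗ τ) :
    Function.Exact ((spliceMap₁ d₂ η τ).lTensor I) ((spliceMap₀ d₁ h τ).lTensor I) := by
  rw [lTensor_spliceMap₁, lTensor_spliceMap₀, ← LinearMap.comp_assoc,
    LinearEquiv.precomp_exact_iff_exact, LinearEquiv.conj_symm_exact_iff_exact]
  refine exact_spliceMap₁_spliceMap₀ hd ?_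
  rw [← LinearMap.lTensor_comp, hη, LinearMap.lTensor_sub, LinearMap.lTensor_id,
    LinearMap.lTensor_comp]

theorem lTensor_exact_spliceMap₂_spliceMap₁ {d₁ : Q₂ →ₗ[R] Q₁} {d₂ : Q₃ →ₗ[R] Q₂}
    {d₃ : Q₄ →ₗ[R] Q₃} {h : P →ₗ[R] Q₁} {τ : Q₁ →ₗ[R] P} {η : Q₁ →ₗ[R] Q₂}
    (hd : Function.Exact (d₃.lTensor I) (d₂.lTensor I)) (hd₁₂ : d₁ ∘ₗ d₂ = 0)
    (hη : d₁ ∘ₗ η = LinearMap.id - h ∘ₗ τ) :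
    Function.Exact ((spliceMap₂ d₃).lTensor I) ((spliceMap₁ d₂ η τ).lTensor I) := by
  rw [lTensor_spliceMap₂, lTensor_spliceMap₁, LinearEquiv.postcomp_exact_iff_exact,
    LinearEquiv.conj_symm_exact_iff_exact]
  refine exact_spliceMap₂_spliceMap₁ (d₁ := d₁.lTensor I) (h := h.lTensor I) hd ?_ ?_
  · rw [← LinearMap.lTensor_comp, hd₁₂, LinearMap.lTensor_zero]
  · rw [← LinearMap.lTensor_comp, hη, LinearMap.lTensor_sub, LinearMap.lTensor_id,
      LinearMap.lTensor_comp]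

theorem lTensor_exact_spliceMap₂ {d₃ : Q₄ →ₗ[R] Q₃} {d₄ : Q₅ →ₗ[R] Q₄}
    (hd : Function.Exact (d₄.lTensor I) (d₃.lTensor I)) :
    Function.Exact (d₄.lTensor I) ((spliceMap₂ d₃ : Q₄ →ₗ[R] Q₃ × Q₁).lTensor I) := by
  rw [lTensor_spliceMap₂, LinearEquiv.postcomp_exact_iff_exact]
  exact exact_spliceMap₂ hd

end SpliceMapsTensor

section Splice

variable {R}

theorem IsPGF.of_linearEquiv {M N : ModuleCat.{u} R} (hM : IsPGF R M) (e : M ≃ₗ[R] N) :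
    IsPGF R N := by
  obtain ⟨Q, d, hQ, hd, ⟨φ⟩, hdI⟩ := hM
  exact ⟨Q, d, hQ, hd, ⟨φ.trans e⟩, hdI⟩

def spliceObj (Q : ℤ → ModuleCat.{u} R) (P : ModuleCat.{u} R) : ℤ → ModuleCat.{u} R
  | 0 => P
  | 1 => ModuleCat.of R (Q 2 × P)
  | 2 => ModuleCat.of R (Q 3 × Q 1)
  | .ofNat (n + 3) => Q (.ofNat (n + 3) + 1)
  | .negSucc n => Q (.negSucc n + 1)

def spliceDiff (Q : ℤ → ModuleCat.{u} R) (d : (i : ℤ) → Q (i + 1) →ₗ[R] Q i)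
    {P : ModuleCat.{u} R} (g : P →ₗ[R] Q 0) (h : P →ₗ[R] Q 1) (τ : Q 1 →ₗ[R] P)
    (η : Q 1 →ₗ[R] Q 2) : (i : ℤ) → spliceObj Q P (i + 1) →ₗ[R] spliceObj Q P i
  | 0 => spliceMap₀ (d 1) h τ
  | 1 => spliceMap₁ (d 2) η τ
  | 2 => spliceMap₂ (d 3)
  | .ofNat (n + 3) => by exact d (.ofNat (n + 3) + 1)
  | -1 => g
  | .negSucc (n + 1) => by exact d (.negSucc (n + 1) + 1)

variable {Q : ℤ → ModuleCat.{u} R} {d : (i : ℤ) → Q (i + 1) →ₗ[R] Q i} {P : ModuleCat.{u} R}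
  {g : P →ₗ[R] Q 0} {h : P →ₗ[R] Q 1} {τ : Q 1 →ₗ[R] P} {η : Q 1 →ₗ[R] Q 2}

theorem projective_spliceObj (hQ : ∀ i, Module.Projective R (Q i)) [Module.Projective R P] :
    ∀ i, Module.Projective R (spliceObj Q P i)
  | 0 => ‹_›
  | 1 => have := hQ 2; inferInstanceAs (Module.Projective R (Q 2 × P))
  | 2 => have := hQ 3; have := hQ 1; inferInstanceAs (Module.Projective R (Q 3 × Q 1))
  | .ofNat (n + 3) => hQ _
  | .negSucc n => hQ _

theorem exact_spliceDiff (hd : ∀ i, Function.Exact (d (i + 1)) (d i)) (hh : d 0 ∘ₗ h = g)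
    (hτ : g ∘ₗ τ = d 0) (hη : d 1 ∘ₗ η = LinearMap.id - h ∘ₗ τ) :
    ∀ i, Function.Exact (spliceDiff Q d g h τ η (i + 1)) (spliceDiff Q d g h τ η i)
  | 0 => exact_spliceMap₁_spliceMap₀ (hd 1) hη
  | 1 => exact_spliceMap₂_spliceMap₁ (hd 2) (hd 1).linearMap_comp_eq_zero hη
  | 2 => by exact exact_spliceMap₂ (hd 3)
  | .ofNat (n + 3) => by exact hd (.ofNat (n + 3) + 1)
  | -1 => exact_spliceMap₀ (hd 0) hh hτ
  | -2 => by exact (hd (-1)).of_comp_eq_of_comp_eq hh hτ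
  | .negSucc (n + 2) => by exact hd (.negSucc (n + 2) + 1)

theorem lTensor_exact_spliceDiff {I : Type*} [AddCommGroup I] [Module R I]
    (hdI : ∀ i, Function.Exact ((d (i + 1)).lTensor I) ((d i).lTensor I))
    (hd₁₂ : d 1 ∘ₗ d 2 = 0) (hh : d 0 ∘ₗ h = g) (hτ : g ∘ₗ τ = d 0)
    (hη : d 1 ∘ₗ η = LinearMap.id - h ∘ₗ τ) :
    ∀ i, Function.Exact ((spliceDiff Q d g h τ η (i + 1)).lTensor I)
      ((spliceDiff Q d g h τ η i).lTensor I)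
  | 0 => lTensor_exact_spliceMap₁_spliceMap₀ (hdI 1) hη
  | 1 => lTensor_exact_spliceMap₂_spliceMap₁ (hdI 2) hd₁₂ hη
  | 2 => by exact lTensor_exact_spliceMap₂ (hdI 3)
  | .ofNat (n + 3) => by
    -- elaborated before being compared with the goal: unifying `?i + 1` with the goal's
    -- integer index under `lTensor` is prohibitively slow
    have := hdI (.ofNat (n + 3) + 1)
    exact this
  | -1 => lTensor_exact_spliceMap₀ (hdI 0) hh hτ
  | -2 => by
    have := hdI (-1)
    exact lTensor_exact_of_comp_eq_of_comp_eq this hh hτ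
  | .negSucc (n + 2) => by
    have := hdI (.negSucc (n + 2) + 1)
    exact this

theorem isPGF_ker_of_range_eq (hQ : ∀ i, Module.Projective R (Q i))
    (hd : ∀ i, Function.Exact (d (i + 1)) (d i))
    (hdI : ∀ I : ModuleCat.{u} R, Module.Injective R I →
      ∀ i, Function.Exact ((d (i + 1)).lTensor I) ((d i).lTensor I))
    [Module.Projective R P] (hg : LinearMap.range g = LinearMap.range (d 0)) :
    IsPGF R (ModuleCat.of R (LinearMap.ker g)) := by
  have := hQ 1
  have hd₀ : Function.Exact (d 1) (d 0) := hd 0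
  obtain ⟨h, hh⟩ : ∃ h : P →ₗ[R] Q 1, d 0 ∘ₗ h = g :=
    Module.Projective.exists_comp_eq_of_range_le hg.le
  obtain ⟨τ, hτ⟩ : ∃ τ : Q 1 →ₗ[R] P, g ∘ₗ τ = d 0 :=
    Module.Projective.exists_comp_eq_of_range_le hg.ge
  obtain ⟨η, hη⟩ : ∃ η : Q 1 →ₗ[R] Q 2, d 1 ∘ₗ η = LinearMap.id - h ∘ₗ τ := by
    refine Module.Projective.exists_comp_eq_of_range_le ?_
    rw [← hd₀.linearMap_ker_eq, LinearMap.range_le_ker_iff, LinearMap.comp_sub,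
      LinearMap.comp_id, ← LinearMap.comp_assoc, hh, hτ, sub_self]
  have hker : LinearMap.range (spliceMap₀ (d 1) h τ) = LinearMap.ker g :=
    (exact_spliceMap₀ hd₀ hh hτ).linearMap_ker_eq.symm
  exact ⟨spliceObj Q P, spliceDiff Q d g h τ η, projective_spliceObj hQ,
    exact_spliceDiff hd hh hτ hη, ⟨LinearEquiv.ofEq _ _ hker⟩,
    fun I _ => lTensor_exact_spliceDiff (hdI I ‹_›) (hd 1).linearMap_comp_eq_zero hh hτ hη⟩

end Splice

theorem stmt0 (M P G : ModuleCat.{u} R) (f : M →ₗ[R] P) (g : P →ₗ[R] G)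
    (hP : Module.Projective R P) (hG : IsPGF R G)
    (hf : Function.Injective f) (hfg : Function.Exact f g) (hg : Function.Surjective g) :
    IsPGF R M := by
  obtain ⟨Q, d, hQ, hd, ⟨φ⟩, hdI⟩ := hG
  let g' : P →ₗ[R] Q 0 := (LinearMap.range (d 0)).subtype ∘ₗ φ.symm.toLinearMap ∘ₗ g
  have hrange : LinearMap.range g' = LinearMap.range (d 0) := by
    simp [g', LinearMap.range_comp, LinearMap.range_eq_top.2 hg]
  have hker : LinearMap.ker g' = LinearMap.range f := by
    simp [g', LinearMap.ker_comp, hfg.linearMap_ker_eq]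
  exact (isPGF_ker_of_range_eq hQ hd hdI hrange).of_linearEquiv
    ((LinearEquiv.ofEq _ _ hker).trans (LinearEquiv.ofInjective f hf).symm)
end

section
/- An R-module M is PGF if and only if (i) there exists an exact sequence 0 → M → P⁰ → P¹ → ⋯ with each Pⁱ projective such that I ⊗_R − preserves its exactness for every injective module I, and (ii) Torᵢ^R(I, M) = 0 for every i > 0 and every injective module I. -/
open CategoryTheory

universe u

variable (R : Type u) [CommRing R]

/-! Write `d₀ : P₁ → P₀` of the defining complex `P` as `P₁ ↠ M ↪ P₀`. The half `P₀ → P₋₁ → ⋯`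
is the required coresolution, and `⋯ → P₂ → P₁ ↠ M` is a projective resolution of `M`, so
`Torᵢ(I, M)` is the homology of `I ⊗ P_{≥1}`, which vanishes. The one non-formal point is that
`I ⊗ (M ↪ P₀)` stays injective: `I ⊗ P₂ → I ⊗ P₁ ↠ I ⊗ M` is exact by right exactness, and so is
`I ⊗ P₂ → I ⊗ P₁ → I ⊗ P₀`. Conversely, splice the coresolution with any projective resolution
of `M`; the vanishing of Tor is exactly the `I ⊗ -`-exactness of the left half. -/

universe v

section

variable {S : Type*} [Ring S]

lemma LinearMap.exists_surjective_injective_factor {B C M : Type*} [AddCommGroup B]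
    [AddCommGroup C] [AddCommGroup M] [Module S B] [Module S C] [Module S M] (g : B →ₗ[S] C)
    (e : LinearMap.range g ≃ₗ[S] M) :
    ∃ (q : B →ₗ[S] M) (ι : M →ₗ[S] C),
      Function.Surjective q ∧ Function.Injective ι ∧ ι ∘ₗ q = g :=
  ⟨e.toLinearMap ∘ₗ g.rangeRestrict, (LinearMap.range g).subtype ∘ₗ e.symm.toLinearMap,
    e.surjective.comp g.surjective_rangeRestrict,
    (LinearMap.range g).injective_subtype.comp e.symm.injective, by ext; simp⟩

lemma LinearMap.injective_of_exact_comp {A B C M : Type*} [AddCommGroup A] [AddCommGroup B]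
    [AddCommGroup C] [AddCommGroup M] [Module S A] [Module S B] [Module S C] [Module S M]
    {u : A →ₗ[S] B} {q : B →ₗ[S] M} {ι : M →ₗ[S] C} (hq : Function.Surjective q)
    (huq : Function.Exact u q) (huιq : Function.Exact u (ι ∘ₗ q)) : Function.Injective ι := by
  rw [← LinearMap.ker_eq_bot, eq_bot_iff]
  intro y hy
  obtain ⟨x, rfl⟩ := hq y
  obtain ⟨z, rfl⟩ := (huιq x).mp hy
  exact huq.apply_apply_eq_zero z

lemma ChainComplex.moduleCat_exactAt_succ_iff (K : ChainComplex (ModuleCat.{v} S) ℕ) (n : ℕ) :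
    K.ExactAt (n + 1) ↔ Function.Exact (K.d (n + 2) (n + 1)).hom (K.d (n + 1) n).hom := by
  rw [HomologicalComplex.exactAt_iff' _ (n + 2) (n + 1) n (by simp) (by simp),
    ShortComplex.ShortExact.moduleCat_exact_iff_function_exact]
  rfl

end

section

variable {R}

lemma LinearMap.injective_lTensor_and_exact_of_factor {A B C D M : Type*} [AddCommGroup A]
    [AddCommGroup B] [AddCommGroup C] [AddCommGroup D] [AddCommGroup M] [Module R A]
    [Module R B] [Module R C] [Module R D] [Module R M] (Q : Type*) [AddCommGroup Q] [Module R Q]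
    {u : A →ₗ[R] B} {q : B →ₗ[R] M} {ι : M →ₗ[R] C} {v : C →ₗ[R] D}
    (hq : Function.Surjective q) (huq : Function.Exact u q)
    (hu : Function.Exact (u.lTensor Q) ((ι ∘ₗ q).lTensor Q))
    (hv : Function.Exact ((ι ∘ₗ q).lTensor Q) (v.lTensor Q)) :
    Function.Injective (ι.lTensor Q) ∧ Function.Exact (ι.lTensor Q) (v.lTensor Q) := by
  have hqQ := LinearMap.lTensor_surjective Q hq
  rw [LinearMap.lTensor_comp] at hu hv
  exact ⟨injective_of_exact_comp hqQ (lTensor_exact Q huq hq) hu, hqQ.comp_exact_iff_exact.mp hv⟩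

namespace CategoryTheory.ProjectiveResolution

variable {M : ModuleCat.{u} R} (res : ProjectiveResolution M)

lemma subsingleton_torM_succ_iff (I : ModuleCat.{u} R) (n : ℕ) :
    Subsingleton (torM R (n + 1) I M) ↔
      Function.Exact ((res.complex.d (n + 2) (n + 1)).hom.lTensor I)
        ((res.complex.d (n + 1) n).hom.lTensor I) := by
  rw [← ModuleCat.isZero_iff_subsingleton, torM, Tor, (res.isoLeftDerivedObj _ _).isZero_iff,
    HomologicalComplex.homologyFunctor_obj, ← HomologicalComplex.exactAt_iff_isZero_homology,
    ChainComplex.moduleCat_exactAt_succ_iff]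
  rfl

lemma moduleProjective_X (n : ℕ) : Module.Projective R (res.complex.X n) :=
  (IsProjective.iff_projective _).mpr (res.projective n)

lemma exact_d_succ (n : ℕ) :
    Function.Exact (res.complex.d (n + 2) (n + 1)).hom (res.complex.d (n + 1) n).hom :=
  (ChainComplex.moduleCat_exactAt_succ_iff _ n).mp (res.complex_exactAt_succ n)

lemma exact_d_π : Function.Exact (res.complex.d 1 0).hom (res.π.f 0).hom :=
  (ShortComplex.ShortExact.moduleCat_exact_iff_function_exact _).mp res.exact₀

lemma surjective_π_f_zero : Function.Surjective (res.π.f 0).hom :=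
  (ModuleCat.epi_iff_surjective _).mp inferInstance

end CategoryTheory.ProjectiveResolution

namespace ModuleCat

section Resolution

variable {M : ModuleCat.{u} R} (F : ℕ → ModuleCat.{u} R) (d : ∀ n, F (n + 1) →ₗ[R] F n)
  (p : F 0 →ₗ[R] M)

noncomputable def chainComplexOfLinearMaps (hd : ∀ n, d n ∘ₗ d (n + 1) = 0) :
    ChainComplex (ModuleCat.{u} R) ℕ :=
  ChainComplex.of F (fun n => ofHom (d n)) fun n => hom_ext (hd n)

lemma chainComplexOfLinearMaps_d (hd : ∀ n, d n ∘ₗ d (n + 1) = 0) (n : ℕ) :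
    (chainComplexOfLinearMaps F d hd).d (n + 1) n = ofHom (d n) :=
  ChainComplex.of_d F (fun n => (ofHom (d n) : F (n + 1) ⟶ F n)) n

noncomputable def projectiveResolutionOfExact (hF : ∀ n, Module.Projective R (F n))
    (hd : ∀ n, Function.Exact (d (n + 1)) (d n)) (hp : Function.Surjective p)
    (hdp : Function.Exact (d 0) p) : ProjectiveResolution M where
  complex := chainComplexOfLinearMaps F d fun n => (hd n).linearMap_comp_eq_zero
  projective n := (IsProjective.iff_projective (F n)).mp (hF n)
  π := (ChainComplex.toSingle₀Equiv _ _).symm ⟨ofHom p, by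
    rw [chainComplexOfLinearMaps_d]; exact hom_ext hdp.linearMap_comp_eq_zero⟩
  quasiIso := ⟨fun n => by
    cases n with
    | zero =>
      rw [ChainComplex.quasiIsoAt₀_iff, ShortComplex.quasiIso_iff_of_zeros' _ rfl rfl rfl]
      refine ⟨(ShortComplex.ShortExact.moduleCat_exact_iff_function_exact _).mpr ?_,
        (epi_iff_surjective _).mpr hp⟩
      change Function.Exact
        ((chainComplexOfLinearMaps F d fun n => (hd n).linearMap_comp_eq_zero).d 1 0).hom p
      rw [chainComplexOfLinearMaps_d F d _ 0]
      exact hdp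
    | succ n =>
      rw [quasiIsoAt_iff_exactAt' _ _ (ChainComplex.exactAt_succ_single_obj _ _),
        ChainComplex.moduleCat_exactAt_succ_iff, chainComplexOfLinearMaps_d,
        chainComplexOfLinearMaps_d]
      exact hd n⟩

lemma subsingleton_torM_succ_iff_of_exact (hF : ∀ n, Module.Projective R (F n))
    (hd : ∀ n, Function.Exact (d (n + 1)) (d n)) (hp : Function.Surjective p)
    (hdp : Function.Exact (d 0) p) (I : ModuleCat.{u} R) (n : ℕ) :
    Subsingleton (torM R (n + 1) I M) ↔
      Function.Exact ((d (n + 1)).lTensor I) ((d n).lTensor I) := by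
  rw [(projectiveResolutionOfExact F d p hF hd hp hdp).subsingleton_torM_succ_iff]
  dsimp only [projectiveResolutionOfExact]
  rw [chainComplexOfLinearMaps_d F d (fun n => (hd n).linearMap_comp_eq_zero),
    chainComplexOfLinearMaps_d F d (fun n => (hd n).linearMap_comp_eq_zero)]
  rfl

end Resolution

section Splice

variable {M : ModuleCat.{u} R} {F P : ℕ → ModuleCat.{u} R}

variable (F P) in
/-- `⋯ → F 1 → F 0 → P 0 → P 1 → ⋯`, with `F n` in degree `n + 1` and `P n` in degree `-n`. -/
def spliceObj : ℤ → ModuleCat.{u} R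
  | .ofNat 0 => P 0
  | .ofNat (n + 1) => F n
  | .negSucc n => P (n + 1)

lemma projective_spliceObj (hF : ∀ n, Module.Projective R (F n))
    (hP : ∀ n, Module.Projective R (P n)) : ∀ i, Module.Projective R (spliceObj F P i)
  | .ofNat 0 => hP 0
  | .ofNat (n + 1) => hF n
  | .negSucc n => hP (n + 1)

variable (d : ∀ n, F (n + 1) →ₗ[R] F n) (p : F 0 →ₗ[R] M) (f : M →ₗ[R] P 0)
  (δ : ∀ n, P n →ₗ[R] P (n + 1))

def spliceD : ∀ i : ℤ, spliceObj F P (i + 1) →ₗ[R] spliceObj F P i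
  | .ofNat 0 => f ∘ₗ p
  | .ofNat (n + 1) => d n
  | .negSucc 0 => δ 0
  | .negSucc (n + 1) => δ (n + 1)

variable {d p f δ}

lemma exact_spliceD (hd : ∀ n, Function.Exact (d (n + 1)) (d n))
    (hdp : Function.Exact (d 0) p) (hp : Function.Surjective p) (hf : Function.Injective f)
    (hfδ : Function.Exact f (δ 0)) (hδ : ∀ n, Function.Exact (δ n) (δ (n + 1))) :
    ∀ i, Function.Exact (spliceD d p f δ (i + 1)) (spliceD d p f δ i)
  | .ofNat 0 => hf.comp_exact_iff_exact.mpr hdp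
  | .ofNat (n + 1) => hd n
  | .negSucc 0 => hp.comp_exact_iff_exact.mpr hfδ
  | .negSucc 1 => hδ 0
  | .negSucc (n + 2) => hδ (n + 1)

lemma exact_lTensor_spliceD (Q : Type*) [AddCommGroup Q] [Module R Q]
    (hd : ∀ n, Function.Exact ((d (n + 1)).lTensor Q) ((d n).lTensor Q))
    (hdp : Function.Exact (d 0) p) (hp : Function.Surjective p)
    (hf : Function.Injective (f.lTensor Q))
    (hfδ : Function.Exact (f.lTensor Q) ((δ 0).lTensor Q))
    (hδ : ∀ n, Function.Exact ((δ n).lTensor Q) ((δ (n + 1)).lTensor Q)) :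
    ∀ i, Function.Exact ((spliceD d p f δ (i + 1)).lTensor Q) ((spliceD d p f δ i).lTensor Q)
  | .ofNat 0 => by
    show Function.Exact ((d 0).lTensor Q) ((f ∘ₗ p).lTensor Q)
    rw [LinearMap.lTensor_comp]
    exact hf.comp_exact_iff_exact.mpr (lTensor_exact Q hdp hp)
  | .ofNat (n + 1) => hd n
  | .negSucc 0 => by
    show Function.Exact ((f ∘ₗ p).lTensor Q) ((δ 0).lTensor Q)
    rw [LinearMap.lTensor_comp]
    exact (LinearMap.lTensor_surjective Q hp).comp_exact_iff_exact.mpr hfδ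
  | .negSucc 1 => hδ 0
  | .negSucc (n + 2) => hδ (n + 1)

end Splice

section Negative

variable {P : ℤ → ModuleCat.{u} R} (d : ∀ i : ℤ, P (i + 1) →ₗ[R] P i)

variable (P) in
/-- `P (-n)`, defined by cases so that `negD` needs no casts. -/
def negObj : ℕ → ModuleCat.{u} R
  | 0 => P 0
  | n + 1 => P (.negSucc n)

def negD : ∀ n, negObj P n →ₗ[R] negObj P (n + 1)
  | 0 => d (.negSucc 0)
  | n + 1 => d (.negSucc (n + 1))

lemma projective_negObj (hP : ∀ i, Module.Projective R (P i)) :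
    ∀ n, Module.Projective R (negObj P n)
  | 0 => hP 0
  | n + 1 => hP (.negSucc n)

variable {d}

lemma exact_negD (hd : ∀ i, Function.Exact (d (i + 1)) (d i)) :
    ∀ n, Function.Exact (negD d n) (negD d (n + 1))
  | 0 => hd (.negSucc 1)
  | n + 1 => hd (.negSucc (n + 2))

lemma exact_lTensor_negD (Q : Type*) [AddCommGroup Q] [Module R Q]
    (hd : ∀ i, Function.Exact ((d (i + 1)).lTensor Q) ((d i).lTensor Q)) :
    ∀ n, Function.Exact ((negD d n).lTensor Q) ((negD d (n + 1)).lTensor Q)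
  | 0 => hd (.negSucc 1)
  | n + 1 => hd (.negSucc (n + 2))

end Negative

end ModuleCat

open ModuleCat

variable {M : ModuleCat.{u} R}

theorem IsPGF.exists_coresolution (h : IsPGF R M) :
    ∃ (P : ℕ → ModuleCat.{u} R) (f : M →ₗ[R] P 0) (d : (i : ℕ) → P i →ₗ[R] P (i + 1)),
      (∀ i, Module.Projective R (P i)) ∧
      Function.Injective f ∧ Function.Exact f (d 0) ∧
      (∀ i, Function.Exact (d i) (d (i + 1))) ∧
      (∀ (I : ModuleCat.{u} R), Module.Injective R I →
        Function.Injective (f.lTensor I) ∧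
        Function.Exact (f.lTensor I) ((d 0).lTensor I) ∧
        ∀ i, Function.Exact ((d i).lTensor I) ((d (i + 1)).lTensor I)) := by
  obtain ⟨P, d, hP, hd, ⟨e⟩, hPI⟩ := h
  obtain ⟨q, ι, hq, hι, hιq⟩ := (d 0).exists_surjective_injective_factor e
  have hdq : Function.Exact (d 1) q := by
    rw [← hι.comp_exact_iff_exact, hιq]; exact hd 0
  have hιd : Function.Exact ι (d (-1)) := by
    rw [← hq.comp_exact_iff_exact, hιq]; exact hd (-1)
  refine ⟨negObj P, ι, negD d, projective_negObj hP, hι, hιd, exact_negD hd, fun I hI => ?_⟩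
  obtain ⟨hιI, hιdI⟩ := LinearMap.injective_lTensor_and_exact_of_factor (v := d (-1)) I hq hdq
    (by rw [hιq]; exact hPI I hI 0) (by rw [hιq]; exact hPI I hI (-1))
  exact ⟨hιI, hιdI, exact_lTensor_negD I (hPI I hI)⟩

theorem IsPGF.subsingleton_torM (h : IsPGF R M) {i : ℕ} (hi : 0 < i) (I : ModuleCat.{u} R)
    (hI : Module.Injective R I) : Subsingleton (torM R i I M) := by
  obtain ⟨P, d, hP, hd, ⟨e⟩, hPI⟩ := h
  obtain ⟨q, ι, hq, hι, hιq⟩ := (d 0).exists_surjective_injective_factor e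
  have hdq : Function.Exact (d 1) q := by
    rw [← hι.comp_exact_iff_exact, hιq]; exact hd 0
  obtain ⟨n, rfl⟩ := Nat.exists_eq_succ_of_ne_zero hi.ne'
  have hres := subsingleton_torM_succ_iff_of_exact (fun n => P (.ofNat (n + 1)))
    (fun n => d (.ofNat (n + 1))) q (fun _ => hP _) (fun n => hd (.ofNat (n + 1))) hq hdq I n
  exact hres.mpr (hPI I hI (.ofNat (n + 1)))

theorem isPGF_of_coresolution (P : ℕ → ModuleCat.{u} R) (f : M →ₗ[R] P 0)
    (δ : ∀ n, P n →ₗ[R] P (n + 1)) (hP : ∀ n, Module.Projective R (P n))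
    (hf : Function.Injective f) (hfδ : Function.Exact f (δ 0))
    (hδ : ∀ n, Function.Exact (δ n) (δ (n + 1)))
    (hPI : ∀ (I : ModuleCat.{u} R), Module.Injective R I →
      Function.Injective (f.lTensor I) ∧ Function.Exact (f.lTensor I) ((δ 0).lTensor I) ∧
        ∀ n, Function.Exact ((δ n).lTensor I) ((δ (n + 1)).lTensor I))
    (htor : ∀ i : ℕ, 0 < i → ∀ (I : ModuleCat.{u} R), Module.Injective R I →
      Subsingleton (torM R i I M)) :
    IsPGF R M := by
  let res := ProjectiveResolution.of M
  have hrange : LinearMap.range (f ∘ₗ (res.π.f 0).hom) = LinearMap.range f :=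
    LinearMap.range_comp_of_range_eq_top f (LinearMap.range_eq_top.mpr res.surjective_π_f_zero)
  refine ⟨_, spliceD (fun n => (res.complex.d (n + 1) n).hom) (res.π.f 0).hom f δ,
    projective_spliceObj res.moduleProjective_X hP,
    exact_spliceD res.exact_d_succ res.exact_d_π res.surjective_π_f_zero hf hfδ hδ,
    ⟨(LinearEquiv.ofEq _ _ hrange).trans (LinearEquiv.ofInjective f hf).symm⟩, fun I hI => ?_⟩
  obtain ⟨hfI, hfδI, hδI⟩ := hPI I hI
  exact exact_lTensor_spliceD I
    (fun n => (res.subsingleton_torM_succ_iff I n).mp (htor (n + 1) n.succ_pos I hI))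
    res.exact_d_π res.surjective_π_f_zero hfI hfδI hδI

end

theorem stmt1 (M : ModuleCat.{u} R) :
    IsPGF R M ↔
      ((∃ (P : ℕ → ModuleCat.{u} R) (f : M →ₗ[R] P 0) (d : (i : ℕ) → P i →ₗ[R] P (i + 1)),
          (∀ i, Module.Projective R (P i)) ∧
          Function.Injective f ∧ Function.Exact f (d 0) ∧
          (∀ i, Function.Exact (d i) (d (i + 1))) ∧
          (∀ (I : ModuleCat.{u} R), Module.Injective R I →
            Function.Injective (f.lTensor I) ∧
            Function.Exact (f.lTensor I) ((d 0).lTensor I) ∧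
            ∀ i, Function.Exact ((d i).lTensor I) ((d (i + 1)).lTensor I))) ∧
        (∀ i : ℕ, 0 < i → ∀ (I : ModuleCat.{u} R), Module.Injective R I →
          Subsingleton (torM R i I M))) := by
  refine ⟨fun h => ⟨h.exists_coresolution, fun i hi I hI => h.subsingleton_torM hi I hI⟩, ?_⟩
  rintro ⟨⟨P, f, d, hP, hf, hfd, hd, hPI⟩, htor⟩
  exact isPGF_of_coresolution P f d hP hf hfd hd hPI htor
end

section
/- If M is a PGF R-module, then Torᵢ^R(I', M) = 0 for every i > 0 and every module I' of finite injective dimension. -/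
open CategoryTheory

universe u

variable (R : Type u) [CommRing R]

/-! The half `⋯ → P 2 → P 1` of a complete resolution `P` of `M` (recall `M ≅ range (d 0)`) is
a projective resolution of `M`, so `Tor_i(X, M)` is the homology of `X ⊗ P_{≥1}`. For injective
`X` this complex is exact in positive degrees by the definition of PGF. Since the `P i` are flat,
an injective coresolution step `0 → X → I → I/X → 0` gives a short exact sequence of complexes
`0 → X ⊗ P → I ⊗ P → I/X ⊗ P → 0`; its long exact homology sequence places `H_{i+1}(X ⊗ P)`
between `H_{i+2}(I/X ⊗ P)` and `H_{i+1}(I ⊗ P)`, and induction on the injective dimension of `X`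
finishes the proof. -/

open MonoidalCategory Limits

variable {R}

section TensorComplex

variable (C : ChainComplex (ModuleCat.{u} R) ℕ)

noncomputable abbrev tensorComplex (A : ModuleCat.{u} R) : ChainComplex (ModuleCat.{u} R) ℕ :=
  (((tensoringLeft (ModuleCat.{u} R)).obj A).mapHomologicalComplex _).obj C

noncomputable abbrev tensorComplexMap {A B : ModuleCat.{u} R} (g : A ⟶ B) :
    tensorComplex C A ⟶ tensorComplex C B :=
  (NatTrans.mapHomologicalComplex ((tensoringLeft (ModuleCat.{u} R)).map g) _).app C

lemma tensorComplexMap_comp_eq_zero {S : ShortComplex (ModuleCat.{u} R)} :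
    tensorComplexMap C S.f ≫ tensorComplexMap C S.g = 0 := by
  ext n : 1
  change S.f ▷ C.X n ≫ S.g ▷ C.X n = 0
  rw [← comp_whiskerRight, S.zero, MonoidalPreadditive.zero_whiskerRight]

variable [∀ n, Module.Flat R (C.X n)]

lemma shortExact_tensorComplex {S : ShortComplex (ModuleCat.{u} R)} (hS : S.ShortExact) :
    (ShortComplex.mk _ _ (tensorComplexMap_comp_eq_zero C (S := S))).ShortExact :=
  HomologicalComplex.shortExact_of_degreewise_shortExact _ fun n =>
    hS.map_of_exact (tensorRight (C.X n))

lemma tensorComplex_exactAt_of_shortExact {S : ShortComplex (ModuleCat.{u} R)}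
    (hS : S.ShortExact) (n : ℕ) (h₂ : (tensorComplex C S.X₂).ExactAt (n + 1))
    (h₃ : (tensorComplex C S.X₃).ExactAt (n + 2)) : (tensorComplex C S.X₁).ExactAt (n + 1) := by
  rw [HomologicalComplex.exactAt_iff_isZero_homology] at h₂ h₃ ⊢
  exact ((shortExact_tensorComplex C hS).homology_exact₁ (n + 2) (n + 1) rfl).isZero_X₂
    (h₃.eq_of_src _ _) (h₂.eq_of_tgt _ _)

lemma tensorComplex_exactAt_of_idLE
    (hinj : ∀ I : ModuleCat.{u} R, Module.Injective R I → ∀ n, (tensorComplex C I).ExactAt (n + 1))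
    (k : ℕ) : ∀ X : ModuleCat.{u} R, idLE R k X → ∀ n, (tensorComplex C X).ExactAt (n + 1) := by
  induction k with
  | zero => exact hinj
  | succ k ih =>
    rintro X ⟨I, f, hI, hf, hQ⟩ n
    exact tensorComplex_exactAt_of_shortExact C
      (ModuleCat.shortComplex_shortExact (ModuleCat.shortComplexOfCompEqZero f _
        (LinearMap.range_mkQ_comp f)) (LinearMap.exact_map_mkQ_range f) hf
        (Submodule.mkQ_surjective _)) n (hinj I hI n) (ih _ hQ (n + 1))

end TensorComplex

section Resolution

lemma exactAt_succ_of_function_exact {C : ChainComplex (ModuleCat.{u} R) ℕ} {n : ℕ}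
    (h : Function.Exact (C.d (n + 2) (n + 1)) (C.d (n + 1) n)) : C.ExactAt (n + 1) := by
  rw [HomologicalComplex.exactAt_iff' _ (n + 2) (n + 1) n (by simp) (by simp)]
  exact (ShortComplex.ShortExact.moduleCat_exact_iff_function_exact _).2 h

variable {C : ChainComplex (ModuleCat.{u} R) ℕ} {M : ModuleCat.{u} R}

noncomputable def projectiveResolutionOfExact (hproj : ∀ n, Module.Projective R (C.X n))
    (hC : ∀ n, C.ExactAt (n + 1)) (π : C.X 0 ⟶ M) (hπ : Function.Exact (C.d 1 0) π)
    (hπ_surj : Function.Surjective π) : ProjectiveResolution M where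
  complex := C
  projective n := (IsProjective.iff_projective.{u, u} (C.X n)).mp (hproj n)
  π := (ChainComplex.toSingle₀Equiv _ _).symm
    ⟨π, ModuleCat.hom_ext (LinearMap.ext hπ.apply_apply_eq_zero)⟩
  quasiIso := ⟨fun n => by
    cases n with
    | zero =>
      rw [ChainComplex.quasiIsoAt₀_iff, ShortComplex.quasiIso_iff_of_zeros']
      · exact ⟨(ShortComplex.ShortExact.moduleCat_exact_iff_function_exact _).2 hπ,
          (ModuleCat.epi_iff_surjective _).2 hπ_surj⟩
      · exact C.shape _ _ (by simp)
      all_goals rfl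
    | succ n =>
      rw [quasiIsoAt_iff_exactAt' _ _ (ChainComplex.exactAt_succ_single_obj _ _)]
      exact hC n⟩

end Resolution

section CompleteResolution

variable {P : ℤ → ModuleCat.{u} R} {d : (i : ℤ) → P (i + 1) →ₗ[R] P i}
  (hd : ∀ i, Function.Exact (d (i + 1)) (d i))

noncomputable def positivePart : ChainComplex (ModuleCat.{u} R) ℕ :=
  ChainComplex.of (fun n : ℕ => P (n + 1))
    (fun n => (ModuleCat.ofHom (d (n + 1)) : P ((n : ℤ) + 1 + 1) ⟶ P (n + 1)))
    (fun n => ModuleCat.hom_ext (by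
      rw [ModuleCat.hom_comp, ModuleCat.hom_zero]; exact (hd (n + 1)).linearMap_comp_eq_zero))

lemma positivePart_d (n : ℕ) :
    (positivePart hd).d (n + 1) n = ModuleCat.ofHom (d (n + 1)) :=
  ChainComplex.of_d (fun n : ℕ => P (n + 1))
    (fun n => (ModuleCat.ofHom (d (n + 1)) : P ((n : ℤ) + 1 + 1) ⟶ P (n + 1))) n

lemma positivePart_exactAt (n : ℕ) : (positivePart hd).ExactAt (n + 1) := by
  apply exactAt_succ_of_function_exact
  rw [positivePart_d, positivePart_d]
  exact hd (n + 1)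

lemma tensorComplex_positivePart_exactAt {A : ModuleCat.{u} R}
    (hA : ∀ i, Function.Exact ((d (i + 1)).lTensor A) ((d i).lTensor A)) (n : ℕ) :
    (tensorComplex (positivePart hd) A).ExactAt (n + 1) := by
  apply exactAt_succ_of_function_exact
  rw [Functor.mapHomologicalComplex_obj_d, Functor.mapHomologicalComplex_obj_d, positivePart_d,
    positivePart_d]
  show Function.Exact ((d ((n : ℤ) + 1 + 1)).lTensor A) ((d ((n : ℤ) + 1)).lTensor A)
  exact hA (n + 1)

end CompleteResolution

lemma IsPGF.exists_projectiveResolution {M : ModuleCat.{u} R} (hM : IsPGF R M) :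
    ∃ Pr : ProjectiveResolution M, ∀ I : ModuleCat.{u} R, Module.Injective R I →
      ∀ n, (tensorComplex Pr.complex I).ExactAt (n + 1) := by
  obtain ⟨P, d, hP, hd, ⟨e⟩, htens⟩ := hM
  refine ⟨projectiveResolutionOfExact (fun n => hP _) (positivePart_exactAt hd)
    (ModuleCat.ofHom (e.toLinearMap ∘ₗ (d 0).rangeRestrict)) ?_ ?_,
    fun I hI => tensorComplex_positivePart_exactAt hd (htens I hI)⟩
  · rw [positivePart_d]
    intro y
    exact (e.map_eq_zero_iff.trans (Submodule.mk_eq_zero _ _)).trans (hd 0 y)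
  · exact e.surjective.comp (d 0).surjective_rangeRestrict

theorem stmt2 (M : ModuleCat.{u} R) (hM : IsPGF R M) :
    ∀ i : ℕ, 0 < i → ∀ (I' : ModuleCat.{u} R), (∃ n, idLE R n I') →
      Subsingleton (torM R i I' M) := by
  obtain ⟨Pr, hPr⟩ := hM.exists_projectiveResolution
  rintro i hi I' ⟨k, hk⟩
  obtain ⟨n, rfl⟩ := Nat.exists_eq_add_one.mpr hi
  have hI' := tensorComplex_exactAt_of_idLE Pr.complex hPr k I' hk n
  rw [HomologicalComplex.exactAt_iff_isZero_homology] at hI'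
  exact ModuleCat.subsingleton_of_isZero
    (hI'.of_iso (Pr.isoLeftDerivedObj ((tensoringLeft _).obj I') (n + 1)))
end

section
/- Every PGF R-module is a direct summand of a strongly PGF R-module. -/
open CategoryTheory

universe u

variable (R : Type u) [CommRing R]

/-! Let `⋯ → Pᵢ₊₁ → Pᵢ → ⋯` be a complete resolution of `M` by projectives with images
`Kᵢ = im dᵢ`, so that `M ≅ K₀`. Summing the short exact sequences `0 → Kᵢ₊₁ → Pᵢ₊₁ → Kᵢ → 0`
over all `i` and shifting the index on the left gives `0 → ⨁ Kᵢ → ⨁ Pᵢ₊₁ → ⨁ Kᵢ → 0`, with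
projective middle term. For injective `I`, tensoring with `I` is right exact, and it keeps each
`Kᵢ₊₁ → Pᵢ₊₁` injective because `I ⊗ P` is exact at `Pᵢ₊₂`; since `I ⊗ -` commutes with direct
sums, the summed sequence stays exact as well. Hence `⨁ Kᵢ` is strongly PGF and has `M` as a
direct summand. -/

open DirectSum TensorProduct LinearMap Function

section TensorDirectSum

variable {R : Type*} [CommRing R] {ι : Type*} {M N K : ι → Type*}
  [∀ i, AddCommGroup (M i)] [∀ i, Module R (M i)]
  [∀ i, AddCommGroup (N i)] [∀ i, Module R (N i)]
  [∀ i, AddCommGroup (K i)] [∀ i, Module R (K i)]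
  (Q : Type*) [AddCommGroup Q] [Module R Q]

lemma DirectSum.exact_lmap {f : ∀ i, M i →ₗ[R] N i} {g : ∀ i, N i →ₗ[R] K i}
    (hfg : ∀ i, Exact (f i) (g i)) : Exact (lmap f) (lmap g) := by
  rw [exact_iff, ker_lmap, range_lmap]
  simp_rw [fun i ↦ (hfg i).linearMap_ker_eq]

lemma TensorProduct.directSumRight_comp_lTensor_lmap [DecidableEq ι] (f : ∀ i, M i →ₗ[R] N i) :
    (directSumRight R R Q N).toLinearMap ∘ₗ (lmap f).lTensor Q =
      (lmap fun i ↦ (f i).lTensor Q) ∘ₗ (directSumRight R R Q M).toLinearMap := by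
  ext; simp

lemma TensorProduct.lTensor_lmap_injective [DecidableEq ι] {f : ∀ i, M i →ₗ[R] N i}
    (hf : ∀ i, Injective ((f i).lTensor Q)) : Injective ((lmap f).lTensor Q) := by
  have h := congrArg DFunLike.coe (directSumRight_comp_lTensor_lmap Q f)
  simp only [coe_comp, LinearEquiv.coe_coe] at h
  rw [← (directSumRight R R Q N).injective.of_comp_iff, h]
  exact (lmap_injective _ |>.mpr hf).comp (directSumRight R R Q M).injective

end TensorDirectSum

section RangeFactorization

variable {R : Type*} [CommRing R] {A B C : Type*}
  [AddCommGroup A] [Module R A] [AddCommGroup B] [Module R B] [AddCommGroup C] [Module R C]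

lemma Function.Exact.exact_subtype_rangeRestrict {f : A →ₗ[R] B} {g : B →ₗ[R] C}
    (hfg : Exact f g) : Exact (range f).subtype g.rangeRestrict := by
  rw [exact_iff, ker_rangeRestrict, Submodule.range_subtype, hfg.linearMap_ker_eq]

lemma LinearMap.lTensor_range_subtype_injective (Q : Type*) [AddCommGroup Q] [Module R Q]
    {f : A →ₗ[R] B} {g : B →ₗ[R] C} (hgf : g ∘ₗ f = 0)
    (hfgQ : Exact (f.lTensor Q) (g.lTensor Q)) :
    Injective ((range g).subtype.lTensor Q) := by
  have hg : (range g).subtype ∘ₗ g.rangeRestrict = g := rfl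
  have hgf' : g.rangeRestrict ∘ₗ f = 0 := by
    ext a
    simpa using congrArg (· a) hgf
  rw [injective_iff_map_eq_zero]
  intro t ht
  obtain ⟨s, rfl⟩ := lTensor_surjective Q g.surjective_rangeRestrict t
  have hs : g.lTensor Q s = 0 := by rw [← hg, lTensor_comp, LinearMap.comp_apply, ht]
  obtain ⟨u, rfl⟩ := (hfgQ s).mp hs
  rw [← LinearMap.comp_apply, ← lTensor_comp, hgf', lTensor_zero, LinearMap.zero_apply]

end RangeFactorization

section StronglyPGF

variable {R}

lemma isStronglyPGF_of_exact {N P : Type u} [AddCommGroup N] [Module R N]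
    [AddCommGroup P] [Module R P] [Module.Projective R P]
    {f : N →ₗ[R] P} {g : P →ₗ[R] N} (hf : Injective f) (hfg : Exact f g) (hg : Surjective g)
    (hfI : ∀ (I : ModuleCat.{u} R), Module.Injective R I → Injective (f.lTensor I)) :
    IsStronglyPGF R (ModuleCat.of R N) :=
  ⟨ModuleCat.of R P, f, g, ‹_›, hf, hfg, hg, fun I hI ↦ ⟨hfI I hI, lTensor_exact I hfg hg⟩⟩

lemma isDirectSummand_directSum_of_linearEquiv {ι : Type} [DecidableEq ι] {K : ι → Type u}
    [∀ i, AddCommGroup (K i)] [∀ i, Module R (K i)] {M : ModuleCat.{u} R} (j : ι)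
    (φ : K j ≃ₗ[R] M) : IsDirectSummand R M (ModuleCat.of R (⨁ i, K i)) :=
  ⟨lof R ι K j ∘ₗ φ.symm.toLinearMap, φ.toLinearMap ∘ₗ component R ι K j, by ext; simp⟩

theorem isStronglyPGF_directSum_range {P : ℤ → ModuleCat.{u} R}
    (d : ∀ i : ℤ, P (i + 1) →ₗ[R] P i) (hproj : ∀ i, Module.Projective R (P i))
    (hex : ∀ i, Exact (d (i + 1)) (d i))
    (htens : ∀ (I : ModuleCat.{u} R), Module.Injective R I →
      ∀ i, Exact ((d (i + 1)).lTensor I) ((d i).lTensor I)) :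
    IsStronglyPGF R (ModuleCat.of R (⨁ i, range (d i))) := by
  have := fun i ↦ hproj (i + 1)
  let e : (⨁ i, range (d i)) ≃ₗ[R] ⨁ i, range (d (i + 1)) :=
    lequivCongrLeft R (Equiv.subRight 1)
  let inc : ∀ i, range (d (i + 1)) →ₗ[R] P (i + 1) := fun i ↦ (range (d (i + 1))).subtype
  refine isStronglyPGF_of_exact (P := ⨁ i, P (i + 1)) (f := lmap inc ∘ₗ e.toLinearMap)
    (g := lmap fun i ↦ (d i).rangeRestrict) ?_ ?_ ?_ ?_
  · exact ((lmap_injective _).mpr fun i ↦ Subtype.val_injective).comp e.injective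
  · exact LinearEquiv.precomp_exact_iff_exact.mpr
      (exact_lmap fun i ↦ (hex i).exact_subtype_rangeRestrict)
  · exact (lmap_surjective _).mpr fun i ↦ (d i).surjective_rangeRestrict
  · intro I hI
    rw [lTensor_comp, coe_comp]
    refine (lTensor_lmap_injective I fun i ↦ ?_).comp (e.lTensor I).injective
    exact lTensor_range_subtype_injective I (hex (i + 1)).linearMap_comp_eq_zero
      (htens I hI (i + 1))

end StronglyPGF

theorem stmt5 (M : ModuleCat.{u} R) (h : IsPGF R M) :
    ∃ N : ModuleCat.{u} R, IsStronglyPGF R N ∧ IsDirectSummand R M N := by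
  obtain ⟨P, d, hproj, hex, ⟨φ⟩, htens⟩ := h
  exact ⟨_, isStronglyPGF_directSum_range d hproj hex htens,
    isDirectSummand_directSum_of_linearEquiv 0 φ⟩
end

section
/- If M admits a short exact sequence 0 → M → P → M → 0 with P projective and Tor₁^R(I, M) = 0 for every injective module I, then Torᵢ^R(I', M) = 0 for every i > 0 and every module I' of finite injective dimension. -/
open CategoryTheory

universe u

variable (R : Type u) [CommRing R]

/-!
Splicing `0 → M → P → M → 0` with itself gives a projective resolution `⋯ → P → P → P → M` of `M`
with all differentials equal to `f ∘ g`, so `Tor_{n+1}(A, M) ≅ Tor_1(A, M)` for every `A`, and the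
hypothesis kills `Tor_{>0}(I, M)` for all injective `I`. A short exact sequence `0 → I' → I → C → 0`
with `I` injective turns the vanishing of `Tor_{k+2}(C, M)` into that of `Tor_{k+1}(I', M)`, which
gives the claim by induction on the injective dimension of `I'`.
-/

open Limits MonoidalCategory

variable {R}

noncomputable def ChainComplex.homologySuccIsoOfConst {C : Type*} [Category C]
    [HasZeroMorphisms C] [CategoryWithHomology C] {X : C} (d : X ⟶ X) (hd : d ≫ d = 0) (n : ℕ) :
    (ChainComplex.of (fun _ : ℕ => X) (fun _ => d) (fun _ => hd)).homology (n + 1) ≅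
      (ChainComplex.of (fun _ : ℕ => X) (fun _ => d) (fun _ => hd)).homology 1 :=
  let K := ChainComplex.of (fun _ : ℕ => X) (fun _ => d) (fun _ => hd)
  have hK (m : ℕ) : K.d (m + 1) m = d := ChainComplex.of_d (fun _ : ℕ => X) (fun _ => d) m
  let e : K.sc' (n + 2) (n + 1) n ≅ K.sc' 2 1 0 :=
    ShortComplex.isoMk (Iso.refl X) (Iso.refl X) (Iso.refl X)
      (by erw [Category.id_comp, Category.comp_id]; exact (hK 1).trans (hK (n + 1)).symm)
      (by erw [Category.id_comp, Category.comp_id]; exact (hK 0).trans (hK n).symm)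
  K.homologyIsoSc' (n + 2) (n + 1) n (by simp) (by simp) ≪≫ ShortComplex.homologyMapIso e ≪≫
    (K.homologyIsoSc' 2 1 0 (by simp) (by simp)).symm

section PeriodicResolution

variable {M P : ModuleCat.{u} R} {f : M →ₗ[R] P} {g : P →ₗ[R] M}

theorem Function.Exact.ofHom_comp_sq_eq_zero (hfg : Function.Exact f g) :
    ModuleCat.ofHom (f ∘ₗ g) ≫ ModuleCat.ofHom (f ∘ₗ g) = 0 := by
  ext x
  simp [hfg.apply_apply_eq_zero]

noncomputable def periodicComplex (hfg : Function.Exact f g) :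
    ChainComplex (ModuleCat.{u} R) ℕ :=
  ChainComplex.of (fun _ => P) (fun _ => ModuleCat.ofHom (f ∘ₗ g))
    (fun _ => hfg.ofHom_comp_sq_eq_zero)

@[simp]
theorem periodicComplex_d (hfg : Function.Exact f g) (n : ℕ) :
    (periodicComplex hfg).d (n + 1) n = ModuleCat.ofHom (f ∘ₗ g) :=
  ChainComplex.of_d (fun _ => P) (fun _ => ModuleCat.ofHom (f ∘ₗ g)) n

theorem periodicComplex_exactAt_succ (hf : Function.Injective f) (hfg : Function.Exact f g)
    (hg : Function.Surjective g) (n : ℕ) : (periodicComplex hfg).ExactAt (n + 1) := by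
  rw [HomologicalComplex.exactAt_iff' _ (n + 2) (n + 1) n (by simp) (by simp),
    ShortComplex.ShortExact.moduleCat_exact_iff_function_exact]
  show Function.Exact ((periodicComplex hfg).d (n + 2) (n + 1)).hom
    ((periodicComplex hfg).d (n + 1) n).hom
  rw [periodicComplex_d, periodicComplex_d]
  exact (hf.comp_exact_iff_exact.mpr (hg.comp_exact_iff_exact.mpr hfg) :
    Function.Exact (f ∘ₗ g) (f ∘ₗ g))

noncomputable def periodicProjectiveResolution (hP : Module.Projective R P)
    (hf : Function.Injective f) (hfg : Function.Exact f g) (hg : Function.Surjective g) :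
    ProjectiveResolution M where
  complex := periodicComplex hfg
  projective _ := (IsProjective.iff_projective P).mp hP
  π := (ChainComplex.toSingle₀Equiv _ _).symm ⟨ModuleCat.ofHom g, by
    rw [periodicComplex_d]
    ext x
    exact hfg.apply_apply_eq_zero (g x)⟩
  quasiIso := ⟨fun n => by
    cases n with
    | zero =>
      rw [ChainComplex.quasiIsoAt₀_iff, ShortComplex.quasiIso_iff_of_zeros' _ rfl rfl rfl,
        ShortComplex.ShortExact.moduleCat_exact_iff_function_exact, ModuleCat.epi_iff_surjective]
      show Function.Exact ((periodicComplex hfg).d 1 0).hom g ∧ Function.Surjective g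
      rw [periodicComplex_d]
      exact ⟨(hg.comp_exact_iff_exact.mpr hfg : Function.Exact (f ∘ₗ g) g), hg⟩
    | succ n =>
      rw [quasiIsoAt_iff_exactAt' _ _ (ChainComplex.exactAt_succ_single_obj _ _)]
      exact periodicComplex_exactAt_succ hf hfg hg n⟩

noncomputable def torMSuccIsoTorMOne (hP : Module.Projective R P) (hf : Function.Injective f)
    (hfg : Function.Exact f g) (hg : Function.Surjective g) (A : ModuleCat.{u} R) (n : ℕ) :
    torM R (n + 1) A M ≅ torM R 1 A M :=
  let Q := periodicProjectiveResolution hP hf hfg hg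
  let F := (tensoringLeft (ModuleCat.{u} R)).obj A
  Q.isoLeftDerivedObj F (n + 1) ≪≫
    (by
      rw [show Q.complex = periodicComplex hfg from rfl, periodicComplex,
        ChainComplex.map_chain_complex_of]
      refine ChainComplex.homologySuccIsoOfConst _ ?_ n
      rw [← F.map_comp, hfg.ofHom_comp_sq_eq_zero, F.map_zero]) ≪≫
    (Q.isoLeftDerivedObj F 1).symm

theorem subsingleton_torM_succ_of_subsingleton_torM_one (hP : Module.Projective R P)
    (hf : Function.Injective f) (hfg : Function.Exact f g) (hg : Function.Surjective g)
    {A : ModuleCat.{u} R}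
    (h : Subsingleton (torM R 1 A M)) (n : ℕ) : Subsingleton (torM R (n + 1) A M) :=
  (torMSuccIsoTorMOne hP hf hfg hg A n).toLinearEquiv.toEquiv.subsingleton

end PeriodicResolution

/-- `Tor` is derived in its second variable; the long exact sequence in the first one comes from
tensoring `S` with a projective resolution of `M`, which keeps it short exact degreewise. -/
theorem subsingleton_torM_of_shortExact {S : ShortComplex (ModuleCat.{u} R)} (hS : S.ShortExact)
    (M : ModuleCat.{u} R) (k : ℕ) (h₃ : Subsingleton (torM R (k + 2) S.X₃ M))
    (h₂ : Subsingleton (torM R (k + 1) S.X₂ M)) : Subsingleton (torM R (k + 1) S.X₁ M) := by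
  let Q := projectiveResolution M
  let tensorQ {A B : ModuleCat.{u} R} (φ : A ⟶ B) :=
    (NatTrans.mapHomologicalComplex ((tensoringLeft _).map φ) _).app Q.complex
  let T : ShortComplex (ChainComplex (ModuleCat.{u} R) ℕ) :=
    ShortComplex.mk (tensorQ S.f) (tensorQ S.g) (by
      ext n : 1
      show S.f ▷ Q.complex.X n ≫ S.g ▷ Q.complex.X n = 0
      rw [← comp_whiskerRight, S.zero, MonoidalPreadditive.zero_whiskerRight])
  have hT : T.ShortExact := HomologicalComplex.shortExact_of_degreewise_shortExact T fun n => by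
    have : Module.Projective R (Q.complex.X n) := (IsProjective.iff_projective _).mpr (Q.projective n)
    exact hS.map_of_exact (tensorRight (Q.complex.X n))
  simp only [← ModuleCat.isZero_iff_subsingleton] at h₂ h₃ ⊢
  refine ((hT.homology_exact₁ (k + 2) (k + 1) rfl).isZero_X₂ ?_ ?_).of_iso
    (Q.isoLeftDerivedObj _ (k + 1))
  · exact (h₃.of_iso (Q.isoLeftDerivedObj _ (k + 2)).symm).eq_of_src _ _
  · exact (h₂.of_iso (Q.isoLeftDerivedObj _ (k + 1)).symm).eq_of_tgt _ _

theorem subsingleton_torM_succ_of_idLE {M : ModuleCat.{u} R}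
    (hM : ∀ I : ModuleCat.{u} R, Module.Injective R I → ∀ k, Subsingleton (torM R (k + 1) I M)) :
    ∀ (n : ℕ) (I' : ModuleCat.{u} R), idLE R n I' → ∀ k, Subsingleton (torM R (k + 1) I' M)
  | 0, I', hI', k => hM I' hI' k
  | n + 1, _, ⟨I, ι, hI, hι, hC⟩, k =>
    subsingleton_torM_of_shortExact
      (ModuleCat.shortComplex_shortExact
        (.mk (ModuleCat.ofHom ι) (ModuleCat.ofHom (LinearMap.range ι).mkQ) (by ext; simp))
        (LinearMap.exact_map_mkQ_range ι) hι (Submodule.mkQ_surjective _))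
      M k (subsingleton_torM_succ_of_idLE hM n _ hC (k + 1)) (hM I hI k)

theorem stmt7 (M P : ModuleCat.{u} R) (f : M →ₗ[R] P) (g : P →ₗ[R] M)
    (hP : Module.Projective R P) (hf : Function.Injective f) (hfg : Function.Exact f g)
    (hg : Function.Surjective g)
    (htor : ∀ (I : ModuleCat.{u} R), Module.Injective R I → Subsingleton (torM R 1 I M)) :
    ∀ i : ℕ, 0 < i → ∀ (I' : ModuleCat.{u} R), (∃ n, idLE R n I') →
      Subsingleton (torM R i I' M) := by
  rintro i hi I' ⟨n, hI'⟩
  obtain ⟨k, rfl⟩ := Nat.exists_eq_add_one_of_ne_zero hi.ne'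
  exact subsingleton_torM_succ_of_idLE
    (fun I hI => subsingleton_torM_succ_of_subsingleton_torM_one hP hf hfg hg (htor I hI)) n I' hI' k
end
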